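/- Let K be a field, A a K-vector space, r ∈ ℕ, and μ_0, …, μ_r K-bilinear maps A × A → A forming an associative deformation up to order r, i.e. Σ_{s=0}^{n} [ μ_s(μ_{n−s}(a,b),c) − μ_s(a, μ_{n−s}(b,c)) ] = 0 for all n ≤ r and all a,b,c ∈ A. Define the trilinear map R_r by R_r(a,b,c) = Σ_{s=1}^{r} [ μ_s(μ_{r+1−s}(a,b),c) − μ_s(a, μ_{r+1−s}(b,c)) ] (so R_0 = 0). Then: (i) for any K-bilinear μ_{r+1}, the maps μ_0, …, μ_{r+1} form an associative deformation up to order r+1 if and only if δμ_{r+1} = R_r, where (δD)(a,b,c) = μ_0(a, D(b,c)) − D(μ_0(a,b), c) + D(a, μ_0(b,c)) − μ_0(D(a,b), c); and (ii) R_r is a Hochschild 3-cocycle of (A, μ_0): μ_0(a, R_r(b,c,d)) − R_r(μ_0(a,b),c,d) + R_r(a,μ_0(b,c),d) − R_r(a,b,μ_0(c,d)) + μ_0(R_r(a,b,c), d) = 0 for all a,b,c,d ∈ A. -/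
import Mathlib

namespace Stmt7

/-- The condition expressing associativity of a formal deformation `μ = ∑ λ^s μ_s`
in order `n`: `∑_{s=0}^{n} [μ_s(μ_{n−s}(a,b),c) − μ_s(a, μ_{n−s}(b,c))] = 0`. -/
def AssocOrder {A : Type*} [AddCommGroup A] (μ : ℕ → A → A → A) (n : ℕ) : Prop :=
  ∀ a b c : A,
    ∑ s ∈ Finset.range (n+1), (μ s (μ (n-s) a b) c - μ s a (μ (n-s) b c)) = 0

/-- The obstruction `R_r(a,b,c) = ∑_{s=1}^{r} [μ_s(μ_{r+1−s}(a,b),c) − μ_s(a, μ_{r+1−s}(b,c))]`. -/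
def Robs {A : Type*} [AddCommGroup A] (μ : ℕ → A → A → A) (r : ℕ) (a b c : A) : A :=
  ∑ s ∈ Finset.Icc 1 r, (μ s (μ (r+1-s) a b) c - μ s a (μ (r+1-s) b c))

section Aux

set_option linter.unreachableTactic false
set_option linter.unusedTactic false

variable {M : Type*} [AddCommMonoid M]

lemma trip_cyc (N : ℕ) (F : ℕ → ℕ → ℕ → M) :
    ∑ t ∈ Finset.range (N+1), ∑ s ∈ Finset.range (N-t+1), F t s (N-t-s)
      = ∑ t ∈ Finset.range (N+1), ∑ s ∈ Finset.range (N-t+1), F s (N-t-s) t := by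
  rw [Finset.sum_sigma', Finset.sum_sigma']
  refine Finset.sum_nbij' (fun p => ⟨N - p.1 - p.2, p.1⟩) (fun q => ⟨q.2, N - q.1 - q.2⟩)
    ?_ ?_ ?_ ?_ ?_
  · rintro ⟨x, y⟩ h
    simp only [Finset.mem_sigma, Finset.mem_range] at *
    omega
  · rintro ⟨x, y⟩ h
    simp only [Finset.mem_sigma, Finset.mem_range] at *
    omega
  · rintro ⟨x, y⟩ h
    simp only [Finset.mem_sigma, Finset.mem_range] at h
    exact Sigma.ext (by first | rfl | (dsimp only; omega))
      (heq_of_eq (by first | rfl | (dsimp only; omega)))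
  · rintro ⟨x, y⟩ h
    simp only [Finset.mem_sigma, Finset.mem_range] at h
    exact Sigma.ext (by first | rfl | (dsimp only; omega))
      (heq_of_eq (by first | rfl | (dsimp only; omega)))
  · rintro ⟨x, y⟩ h
    simp only [Finset.mem_sigma, Finset.mem_range] at h
    have h1 : N - (N - x - y) - x = y := by omega
    simp only [h1]

lemma trip_swap (N : ℕ) (F : ℕ → ℕ → ℕ → M) :
    ∑ t ∈ Finset.range (N+1), ∑ s ∈ Finset.range (N-t+1), F t s (N-t-s)
      = ∑ t ∈ Finset.range (N+1), ∑ s ∈ Finset.range (N-t+1), F (N-t-s) s t := by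
  rw [Finset.sum_sigma', Finset.sum_sigma']
  refine Finset.sum_nbij' (fun p => ⟨N - p.1 - p.2, p.2⟩) (fun q => ⟨N - q.1 - q.2, q.2⟩)
    ?_ ?_ ?_ ?_ ?_
  · rintro ⟨x, y⟩ h
    simp only [Finset.mem_sigma, Finset.mem_range] at *
    omega
  · rintro ⟨x, y⟩ h
    simp only [Finset.mem_sigma, Finset.mem_range] at *
    omega
  · rintro ⟨x, y⟩ h
    simp only [Finset.mem_sigma, Finset.mem_range] at h
    exact Sigma.ext (by first | rfl | (dsimp only; omega))
      (heq_of_eq (by first | rfl | (dsimp only; omega)))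
  · rintro ⟨x, y⟩ h
    simp only [Finset.mem_sigma, Finset.mem_range] at h
    exact Sigma.ext (by first | rfl | (dsimp only; omega))
      (heq_of_eq (by first | rfl | (dsimp only; omega)))
  · rintro ⟨x, y⟩ h
    simp only [Finset.mem_sigma, Finset.mem_range] at h
    have h1 : N - (N - x - y) - y = x := by omega
    simp only [h1]

lemma icc_range (r : ℕ) (f : ℕ → M) :
    ∑ s ∈ Finset.Icc 1 r, f s = ∑ i ∈ Finset.range r, f (i+1) := by
  refine Finset.sum_nbij' (fun s => s - 1) (fun i => i + 1) ?_ ?_ ?_ ?_ ?_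
  · intro s hs; simp only [Finset.mem_Icc, Finset.mem_range] at *; omega
  · intro i hi; simp only [Finset.mem_Icc, Finset.mem_range] at *; omega
  · intro s hs; simp only [Finset.mem_Icc] at hs; show s - 1 + 1 = s; omega
  · intro i _; show i + 1 - 1 = i; omega
  · intro s hs; simp only [Finset.mem_Icc] at hs
    show f s = f (s - 1 + 1)
    congr 1; omega

lemma obstr_iff {G : Type*} [AddCommGroup G] {m p1 p2 q1 q2 : G} :
    (m + (p1 - p2) + (q1 - q2) = 0) ↔ (p2 - q1 + q2 - p1 = m) := by
  constructor
  · intro h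
    rw [add_assoc, add_eq_zero_iff_eq_neg] at h
    rw [h]; abel
  · intro h
    rw [← h]; abel

end Aux

section Key

variable {K A : Type*} [Field K] [AddCommGroup A] [Module K A]

def Gob (m : ℕ → A →ₗ[K] A →ₗ[K] A) (n : ℕ) (x y z : A) : A :=
  ∑ s ∈ Finset.range (n+1), (m s (m (n-s) x y) z - m s x (m (n-s) y z))

lemma keyIdentity (m : ℕ → A →ₗ[K] A →ₗ[K] A) (N : ℕ) (a b c d : A) :
    ∑ t ∈ Finset.range (N+1),
      (m t a (Gob m (N-t) b c d) - Gob m (N-t) (m t a b) c d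
        + Gob m (N-t) a (m t b c) d - Gob m (N-t) a b (m t c d)
        + m t (Gob m (N-t) a b c) d) = 0 := by
  simp only [Gob, map_sum, map_sub, LinearMap.sum_apply, LinearMap.sub_apply,
    Finset.sum_sub_distrib, Finset.sum_add_distrib]
  have h1 : (∑ t ∈ Finset.range (N+1), ∑ s ∈ Finset.range (N-t+1),
        m t a (m s (m (N-t-s) b c) d))
      = ∑ t ∈ Finset.range (N+1), ∑ s ∈ Finset.range (N-t+1),
        m s a (m (N-t-s) (m t b c) d) :=
    trip_cyc N (fun t s u => m t a (m s (m u b c) d))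
  have h2 : (∑ t ∈ Finset.range (N+1), ∑ s ∈ Finset.range (N-t+1),
        m t a (m s b (m (N-t-s) c d)))
      = ∑ t ∈ Finset.range (N+1), ∑ s ∈ Finset.range (N-t+1),
        m s a (m (N-t-s) b (m t c d)) :=
    trip_cyc N (fun t s u => m t a (m s b (m u c d)))
  have h3 : (∑ t ∈ Finset.range (N+1), ∑ s ∈ Finset.range (N-t+1),
        m t (m s (m (N-t-s) a b) c) d)
      = ∑ t ∈ Finset.range (N+1), ∑ s ∈ Finset.range (N-t+1),
        m s (m (N-t-s) (m t a b) c) d :=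
    trip_cyc N (fun t s u => m t (m s (m u a b) c) d)
  have h4 : (∑ t ∈ Finset.range (N+1), ∑ s ∈ Finset.range (N-t+1),
        m t (m s a (m (N-t-s) b c)) d)
      = ∑ t ∈ Finset.range (N+1), ∑ s ∈ Finset.range (N-t+1),
        m s (m (N-t-s) a (m t b c)) d :=
    trip_cyc N (fun t s u => m t (m s a (m u b c)) d)
  have h5 : (∑ t ∈ Finset.range (N+1), ∑ s ∈ Finset.range (N-t+1),
        m s (m t a b) (m (N-t-s) c d))
      = ∑ t ∈ Finset.range (N+1), ∑ s ∈ Finset.range (N-t+1),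
        m s (m (N-t-s) a b) (m t c d) :=
    trip_swap N (fun t s u => m s (m t a b) (m u c d))
  rw [h1, h2, h3, h4, h5]
  abel

end Key

theorem deformation_obstruction_algebra {K A : Type*} [Field K]
    [AddCommGroup A] [Module K A]
    (r : ℕ) (μ : ℕ → A →ₗ[K] A →ₗ[K] A)
    (hdef : ∀ n ≤ r, AssocOrder (fun s x y => μ s x y) n) :
    (∀ ν : A →ₗ[K] A →ₗ[K] A,
      (∀ n ≤ r + 1, AssocOrder (fun s x y => if s = r+1 then ν x y else μ s x y) n)
        ↔ ∀ a b c : A,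
            μ 0 a (ν b c) - ν (μ 0 a b) c + ν a (μ 0 b c) - μ 0 (ν a b) c
              = Robs (fun s x y => μ s x y) r a b c)
    ∧ (∀ a b c d : A,
        μ 0 a (Robs (fun s x y => μ s x y) r b c d)
          - Robs (fun s x y => μ s x y) r (μ 0 a b) c d
          + Robs (fun s x y => μ s x y) r a (μ 0 b c) d
          - Robs (fun s x y => μ s x y) r a b (μ 0 c d)
          + μ 0 (Robs (fun s x y => μ s x y) r a b c) d = 0) := by
  have hRobs : ∀ a b c : A, Robs (fun s x y => μ s x y) r a b c
      = ∑ i ∈ Finset.range r,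
          (μ (i+1) (μ (r+1-(i+1)) a b) c - μ (i+1) a (μ (r+1-(i+1)) b c)) := by
    intro a b c
    simp only [Robs]
    exact icc_range r _
  constructor
  · -- part (i)
    intro ν
    set F : ℕ → A → A → A := fun s x y => if s = r+1 then ν x y else μ s x y with hF
    have hsplit : ∀ a b c : A,
        (∑ s ∈ Finset.range (r+1+1), (F s (F (r+1-s) a b) c - F s a (F (r+1-s) b c)))
          = ((∑ i ∈ Finset.range r,
              (μ (i+1) (μ (r+1-(i+1)) a b) c - μ (i+1) a (μ (r+1-(i+1)) b c)))
            + (μ 0 (ν a b) c - μ 0 a (ν b c)))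
            + (ν (μ 0 a b) c - ν a (μ 0 b c)) := by
      intro a b c
      rw [Finset.sum_range_succ, Finset.sum_range_succ']
      congr 1
      · congr 1
        · refine Finset.sum_congr rfl fun i hi => ?_
          simp only [Finset.mem_range] at hi
          simp only [hF]
          simp only [if_neg (show ¬(i+1 = r+1) by omega),
            if_neg (show ¬(r+1-(i+1) = r+1) by omega)]
        · simp only [hF, Nat.sub_zero]
          simp only [if_neg (show ¬((0:ℕ) = r+1) by omega), eq_self_iff_true, if_true]
      · simp only [hF, Nat.sub_self]
        simp only [eq_self_iff_true, if_true, if_neg (show ¬((0:ℕ) = r+1) by omega)]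
    constructor
    · intro H a b c
      have h : (∑ s ∈ Finset.range (r+1+1),
          (F s (F (r+1-s) a b) c - F s a (F (r+1-s) b c))) = 0 := H (r+1) (le_refl _) a b c
      rw [hsplit a b c] at h
      rw [hRobs a b c]
      exact obstr_iff.mp h
    · intro heq n hn
      by_cases hn' : n ≤ r
      · intro a b c
        have e : ∀ s ∈ Finset.range (n+1),
            (F s (F (n-s) a b) c - F s a (F (n-s) b c))
              = (μ s (μ (n-s) a b) c - μ s a (μ (n-s) b c)) := by
          intro s hs
          simp only [Finset.mem_range] at hs
          simp only [hF]
          simp only [if_neg (show ¬(s = r+1) by omega),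
            if_neg (show ¬(n - s = r+1) by omega)]
        rw [Finset.sum_congr rfl e]
        exact hdef n hn' a b c
      · have hn2 : n = r + 1 := by omega
        subst hn2
        intro a b c
        rw [hsplit a b c]
        have h := heq a b c
        rw [hRobs a b c] at h
        exact obstr_iff.mpr h
  · -- part (ii)
    intro a b c d
    set m : ℕ → A →ₗ[K] A →ₗ[K] A := fun s => if s ≤ r then μ s else 0 with hm
    have hm0 : m 0 = μ 0 := by
      simp only [hm]
      exact if_pos (Nat.zero_le r)
    have hG0 : ∀ n, n ≤ r → ∀ x y z : A, Gob m n x y z = 0 := by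
      intro n hn x y z
      have e : Gob m n x y z
          = ∑ s ∈ Finset.range (n+1), (μ s (μ (n-s) x y) z - μ s x (μ (n-s) y z)) := by
        simp only [Gob]
        refine Finset.sum_congr rfl fun s hs => ?_
        simp only [Finset.mem_range] at hs
        simp only [hm]
        simp only [if_pos (show s ≤ r by omega), if_pos (show n - s ≤ r by omega)]
      rw [e]
      exact hdef n hn x y z
    have hGr1 : ∀ x y z : A, Gob m (r+1) x y z = Robs (fun s x y => μ s x y) r x y z := by
      intro x y z
      simp only [Gob, Robs]
      rw [Finset.sum_range_succ, Finset.sum_range_succ',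
        icc_range r (fun s => μ s (μ (r+1-s) x y) z - μ s x (μ (r+1-s) y z))]
      have h1 : (m 0 (m (r+1-0) x y) z - m 0 x (m (r+1-0) y z)) = 0 := by
        simp [hm, show ¬(r+1 ≤ r) from by omega]
      have h2 : (m (r+1) (m (r+1-(r+1)) x y) z - m (r+1) x (m (r+1-(r+1)) y z)) = 0 := by
        simp [hm, show ¬(r+1 ≤ r) from by omega]
      rw [h1, h2, add_zero, add_zero]
      refine Finset.sum_congr rfl fun i hi => ?_
      simp only [Finset.mem_range] at hi
      simp only [hm]
      simp only [if_pos (show i+1 ≤ r by omega), if_pos (show r+1-(i+1) ≤ r by omega)]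
    have key := keyIdentity m (r+1) a b c d
    have e : ∑ t ∈ Finset.range (r+1+1),
        (m t a (Gob m (r+1-t) b c d) - Gob m (r+1-t) (m t a b) c d
          + Gob m (r+1-t) a (m t b c) d - Gob m (r+1-t) a b (m t c d)
          + m t (Gob m (r+1-t) a b c) d)
        = (m 0 a (Gob m (r+1-0) b c d) - Gob m (r+1-0) (m 0 a b) c d
          + Gob m (r+1-0) a (m 0 b c) d - Gob m (r+1-0) a b (m 0 c d)
          + m 0 (Gob m (r+1-0) a b c) d) := by
      refine Finset.sum_eq_single_of_mem 0 (Finset.mem_range.mpr (by omega)) ?_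
      intro t _ htne
      have ht : r + 1 - t ≤ r := by omega
      simp only [hG0 (r+1-t) ht]
      simp [map_zero]
    rw [e] at key
    simp only [Nat.sub_zero, hm0, hGr1] at key
    exact key

end Stmt7
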